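/- arXiv:2311.00555 — 3 statements merged into one kernel-verified Lean document; each statement's English description precedes it below -/
import Mathlib

section
/- There exist constants C, c > 0 (depending on d) such that for all L ≥ 1, the probability that the number of Poisson points whose Voronoi cell intersects the box Λ_L exceeds C L^d is at most e^{-c L^d}. -/
open MeasureTheory

/-- `η` is a Poisson point process with intensity measure `μ` under `P`. -/
structure IsPoissonPP {Ω E : Type} [MeasurableSpace Ω] [MeasurableSpace E]
    (P : Measure Ω) (μ : Measure E) (η : Ω → Set E) : Prop where
  locallyFinite : ∀ᵐ ω ∂P, ∀ S : Set E, MeasurableSet S → μ S < ⊤ → (η ω ∩ S).Finite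
  counts : ∀ S : Set E, MeasurableSet S → μ S < ⊤ → ∀ n : ℕ,
    P {ω | (η ω ∩ S).Finite ∧ (η ω ∩ S).ncard = n} =
      ENNReal.ofReal (Real.exp (-(μ S).toReal) * (μ S).toReal ^ n / n.factorial)
  indep : ∀ S T : Set E, Disjoint S T → ∀ ES ET : Set Ω,
    (∀ ω ω', η ω ∩ S = η ω' ∩ S → (ω ∈ ES ↔ ω' ∈ ES)) →
    (∀ ω ω', η ω ∩ T = η ω' ∩ T → (ω ∈ ET ↔ ω' ∈ ET)) →
    P (ES ∩ ET) = P ES * P ET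

/-- The Voronoi cell of `x` with respect to a point configuration `ξ`. -/
def VCell {d : ℕ} (x : EuclideanSpace ℝ (Fin d)) (ξ : Set (EuclideanSpace ℝ (Fin d))) :
    Set (EuclideanSpace ℝ (Fin d)) :=
  {y | ∀ z ∈ ξ, dist y x ≤ dist y z}

/-- The box `Λ_L = [-L, L]^d`. -/
def box (d : ℕ) (L : ℝ) : Set (EuclideanSpace ℝ (Fin d)) := {y | ∀ i, |y i| ≤ L}

/-!
If a point `z` of the configuration lies in `Λ_L` and the cell of `x` meets `Λ_L` at `y`,
then `|y - x| ≤ |y - z| ≤ 2√d L`, so `x` lies in the larger box `Λ_R`, `R = (1 + 2√d) L`.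
The bad event is therefore contained in `{η ∩ Λ_L = ∅}`, of probability `e^{-(2L)^d}`, and
in `{#(η ∩ Λ_R) ≥ C L^d}`. Once `C L^d ≥ e² |Λ_R|`, each Poisson weight `e^{-m} m^n / n!`
with `n ≥ C L^d` is at most `e^{-n}` (as `n^n / n! ≤ e^n`), so this tail is at most
`2 e^{-C L^d}`.
-/

open Real Set

lemma box_eq_preimage (d : ℕ) (L : ℝ) :
    box d L = (MeasurableEquiv.toLp 2 (Fin d → ℝ)).symm ⁻¹' univ.pi fun _ => Icc (-L) L := by
  ext y
  simp [box, abs_le, Pi.le_def, forall_and]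

lemma measurableSet_box (d : ℕ) (L : ℝ) : MeasurableSet (box d L) := by
  rw [box_eq_preimage]
  exact (MeasurableEquiv.toLp 2 (Fin d → ℝ)).symm.measurable
    (MeasurableSet.univ_pi fun _ => measurableSet_Icc)

lemma volume_box (d : ℕ) (L : ℝ) : volume (box d L) = ENNReal.ofReal (2 * L) ^ d := by
  rw [box_eq_preimage,
    (EuclideanSpace.volume_preserving_symm_measurableEquiv_toLp (Fin d)).measure_preimage
      (MeasurableSet.univ_pi fun _ => measurableSet_Icc).nullMeasurableSet,
    volume_pi_pi]
  simp [two_mul]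

lemma volume_box_lt_top (d : ℕ) (L : ℝ) : volume (box d L) < ⊤ := by
  rw [volume_box]
  exact ENNReal.pow_lt_top ENNReal.ofReal_lt_top

lemma volume_box_toReal (d : ℕ) {L : ℝ} (hL : 0 ≤ L) :
    (volume (box d L)).toReal = (2 * L) ^ d := by
  rw [volume_box, ENNReal.toReal_pow, ENNReal.toReal_ofReal (by positivity)]

section Box

variable {d : ℕ} {L : ℝ}

lemma norm_le_of_mem_box (hL : 0 ≤ L) {y : EuclideanSpace ℝ (Fin d)} (hy : y ∈ box d L) :
    ‖y‖ ≤ √d * L := by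
  rw [EuclideanSpace.norm_eq]
  calc √(∑ i, ‖y i‖ ^ 2) ≤ √(∑ _ : Fin d, L ^ 2) := by
        gcongr with i
        exact hy i
    _ = √d * L := by simp [Real.sqrt_mul, Real.sqrt_sq hL]

lemma mem_box_of_mem_VCell {ξ : Set (EuclideanSpace ℝ (Fin d))} (hL : 0 ≤ L)
    {z : EuclideanSpace ℝ (Fin d)} (hz : z ∈ ξ ∩ box d L)
    {x : EuclideanSpace ℝ (Fin d)} (hx : (VCell x ξ ∩ box d L).Nonempty) :
    x ∈ box d ((1 + 2 * √d) * L) := by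
  obtain ⟨y, hyx, hy⟩ := hx
  have hxy : dist y x ≤ 2 * √d * L :=
    calc dist y x ≤ dist y z := hyx z hz.1
      _ ≤ ‖y‖ + ‖z‖ := dist_le_norm_add_norm y z
      _ ≤ √d * L + √d * L :=
          add_le_add (norm_le_of_mem_box hL hy) (norm_le_of_mem_box hL hz.2)
      _ = 2 * √d * L := by ring
  intro i
  have hi : |x i - y i| ≤ dist y x := by
    rw [dist_comm, ← Real.dist_eq]
    exact PiLp.dist_apply_le x y i
  linarith [abs_sub_abs_le_abs_sub (x i) (y i), hy i]

lemma empty_or_infinite_or_le_ncard_of_cells_meeting_box {t : ℝ}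
    {ξ : Set (EuclideanSpace ℝ (Fin d))} (hL : 0 ≤ L)
    (h : {x | x ∈ ξ ∧ (VCell x ξ ∩ box d L).Nonempty}.Infinite ∨
      t < ({x | x ∈ ξ ∧ (VCell x ξ ∩ box d L).Nonempty}.ncard : ℝ)) :
    (ξ ∩ box d L = ∅ ∨ (ξ ∩ box d ((1 + 2 * √d) * L)).Infinite) ∨
      (ξ ∩ box d ((1 + 2 * √d) * L)).Finite ∧
        t ≤ (ξ ∩ box d ((1 + 2 * √d) * L)).ncard := by
  rcases (ξ ∩ box d L).eq_empty_or_nonempty with hempty | ⟨z, hz⟩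
  · exact Or.inl (Or.inl hempty)
  rcases (ξ ∩ box d ((1 + 2 * √d) * L)).finite_or_infinite with hfin | hinf
  · have hcells : {x | x ∈ ξ ∧ (VCell x ξ ∩ box d L).Nonempty} ⊆
        ξ ∩ box d ((1 + 2 * √d) * L) := fun x hx => ⟨hx.1, mem_box_of_mem_VCell hL hz hx.2⟩
    refine Or.inr ⟨hfin, ?_⟩
    rcases h with h | h
    · exact absurd (hfin.subset hcells) h
    · exact h.le.trans (by exact_mod_cast ncard_le_ncard hcells hfin)
  · exact Or.inl (Or.inr hinf)

end Box

lemma poisson_pmf_le_exp_neg {m : ℝ} (hm : 0 ≤ m) {n : ℕ} (hn : exp 2 * m ≤ n) :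
    exp (-m) * m ^ n / n.factorial ≤ exp (-n) := by
  have hm' : m ≤ n / exp 2 := by rwa [le_div_iff₀ (exp_pos 2), mul_comm]
  calc exp (-m) * m ^ n / n.factorial ≤ m ^ n / n.factorial := by
        gcongr
        exact mul_le_of_le_one_left (by positivity) (exp_le_one_iff.2 (by linarith))
    _ ≤ (n / exp 2) ^ n / n.factorial := by gcongr
    _ = n ^ n / n.factorial * exp (-(2 * n)) := by
        rw [div_pow, ← exp_nat_mul, exp_neg]
        ring_nf
    _ ≤ exp n * exp (-(2 * n)) := by
        gcongr
        exact Real.pow_div_factorial_le_exp _ n.cast_nonneg n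
    _ = exp (-n) := by
        rw [← exp_add]
        ring_nf

namespace IsPoissonPP

variable {Ω E : Type} [MeasurableSpace Ω] [MeasurableSpace E] {P : Measure Ω} {μ : Measure E}
  {η : Ω → Set E} {S : Set E}

lemma measure_infinite_eq_zero (hη : IsPoissonPP P μ η) (hS : MeasurableSet S)
    (hμS : μ S < ⊤) :
    P {ω | (η ω ∩ S).Infinite} = 0 := by
  refine measure_mono_null (fun ω hω => ?_) (ae_iff.1 hη.locallyFinite)
  exact fun h => hω (h S hS hμS)

lemma measure_inter_eq_empty (hη : IsPoissonPP P μ η) (hS : MeasurableSet S)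
    (hμS : μ S < ⊤) :
    P {ω | η ω ∩ S = ∅} = ENNReal.ofReal (exp (-(μ S).toReal)) := by
  have h := hη.counts S hS hμS 0
  simp only [pow_zero, Nat.factorial_zero, Nat.cast_one, mul_one, div_one] at h
  rw [← h]
  congr 1
  ext ω
  simp only [mem_ofPred_eq]
  exact ⟨fun h => by simp [h], fun h => (Set.ncard_eq_zero h.1).1 h.2⟩

lemma measure_le_ncard_le (hη : IsPoissonPP P μ η) (hS : MeasurableSet S) (hμS : μ S < ⊤)
    {t : ℝ} (ht : exp 2 * (μ S).toReal ≤ t) :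
    P {ω | (η ω ∩ S).Finite ∧ t ≤ (η ω ∩ S).ncard} ≤
      ENNReal.ofReal (2 * exp (-t)) := by
  set N := ⌈t⌉₊
  have hsub : {ω | (η ω ∩ S).Finite ∧ t ≤ (η ω ∩ S).ncard} ⊆
      ⋃ k : ℕ, {ω | (η ω ∩ S).Finite ∧ (η ω ∩ S).ncard = N + k} := fun ω hω =>
    mem_iUnion.2 ⟨(η ω ∩ S).ncard - N, hω.1, by have := Nat.ceil_le.2 hω.2; omega⟩
  have hterm (k : ℕ) : P {ω | (η ω ∩ S).Finite ∧ (η ω ∩ S).ncard = N + k} ≤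
      ENNReal.ofReal (exp (-N) * exp (-1) ^ k) := by
    rw [hη.counts S hS hμS]
    refine ENNReal.ofReal_le_ofReal
      ((poisson_pmf_le_exp_neg ENNReal.toReal_nonneg ?_).trans_eq ?_)
    · push_cast
      linarith [Nat.le_ceil t, k.cast_nonneg (α := ℝ)]
    · rw [← exp_nat_mul, ← exp_add]
      push_cast
      ring_nf
  have hr₀ : 0 ≤ exp (-1) := (exp_pos _).le
  have hr₁ : exp (-1) < 1 / 2 := exp_neg_one_lt_half
  calc P {ω | (η ω ∩ S).Finite ∧ t ≤ (η ω ∩ S).ncard}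
      ≤ ∑' k : ℕ, P {ω | (η ω ∩ S).Finite ∧ (η ω ∩ S).ncard = N + k} :=
        (measure_mono hsub).trans (measure_iUnion_le _)
    _ ≤ ∑' k : ℕ, ENNReal.ofReal (exp (-N) * exp (-1) ^ k) := ENNReal.tsum_le_tsum hterm
    _ = ENNReal.ofReal (exp (-N) * (1 - exp (-1))⁻¹) := by
        rw [← ENNReal.ofReal_tsum_of_nonneg (fun k => by positivity)
            ((summable_geometric_of_lt_one hr₀ (by linarith)).mul_left _),
          tsum_mul_left, tsum_geometric_of_lt_one hr₀ (by linarith)]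
    _ ≤ ENNReal.ofReal (2 * exp (-t)) := by
        refine ENNReal.ofReal_le_ofReal ?_
        rw [mul_comm]
        gcongr
        · rw [inv_le_comm₀ (by linarith) two_pos]
          linarith
        · exact Nat.le_ceil t

end IsPoissonPP

lemma exp_neg_two_mul_add_two_mul_exp_neg_three_mul_le {u : ℝ} (hu : 1 ≤ u) :
    exp (-(2 * u)) + 2 * exp (-(3 * u)) ≤ exp (-u) := by
  have hv : exp (-u) < 1 / 2 := (exp_le_exp.2 (by linarith)).trans_lt exp_neg_one_lt_half
  have h2 : exp (-(2 * u)) = exp (-u) ^ 2 := by rw [← exp_nat_mul]; ring_nf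
  have h3 : exp (-(3 * u)) = exp (-u) ^ 3 := by rw [← exp_nat_mul]; ring_nf
  rw [h2, h3]
  nlinarith [exp_pos (-u)]

/-- There exist `C, c > 0` such that for all `L ≥ 1`, the probability that the number of
Poisson points whose Voronoi cell meets `Λ_L` exceeds `C L^d` is at most `e^{-c L^d}`. -/
theorem many_cells_bound (d : ℕ) (hd : 1 ≤ d) :
    ∃ C : ℝ, 0 < C ∧ ∃ c : ℝ, 0 < c ∧
      ∀ (Ω : Type) (_ : MeasurableSpace Ω) (P : Measure Ω), IsProbabilityMeasure P →
      ∀ η : Ω → Set (EuclideanSpace ℝ (Fin d)), IsPoissonPP P volume η →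
      ∀ L : ℝ, 1 ≤ L →
        P {ω | {x | x ∈ η ω ∧ (VCell x (η ω) ∩ box d L).Nonempty}.Infinite ∨
            C * L ^ d < ({x | x ∈ η ω ∧ (VCell x (η ω) ∩ box d L).Nonempty}.ncard : ℝ)} ≤
          ENNReal.ofReal (Real.exp (-c * L ^ d)) := by
  set C : ℝ := exp 2 * (2 * (1 + 2 * √d)) ^ d + 3
  have hC : 3 ≤ C := le_add_of_nonneg_left (by positivity)
  refine ⟨C, by positivity, 1, one_pos, fun Ω _ P _ η hη L hL => ?_⟩
  set R := (1 + 2 * √d) * L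
  have hL₀ : 0 ≤ L := by linarith
  have hR : 0 ≤ R := by positivity
  have hvolR : exp 2 * (volume (box d R)).toReal ≤ C * L ^ d := by
    rw [volume_box_toReal d hR, ← mul_assoc, mul_pow]
    nlinarith [pow_nonneg hL₀ d]
  calc P _ ≤ P {ω | η ω ∩ box d L = ∅} + P {ω | (η ω ∩ box d R).Infinite} +
        P {ω | (η ω ∩ box d R).Finite ∧ C * L ^ d ≤ (η ω ∩ box d R).ncard} :=
        (measure_mono fun _ => empty_or_infinite_or_le_ncard_of_cells_meeting_box hL₀).trans <|
          (measure_union_le _ _).trans (add_le_add_left (measure_union_le _ _) _)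
    _ ≤ ENNReal.ofReal (exp (-(2 * L) ^ d)) + 0 +
          ENNReal.ofReal (2 * exp (-(C * L ^ d))) := by
        rw [hη.measure_inter_eq_empty (measurableSet_box d L) (volume_box_lt_top d _),
          volume_box_toReal d hL₀,
          hη.measure_infinite_eq_zero (measurableSet_box d R) (volume_box_lt_top d _)]
        gcongr
        exact hη.measure_le_ncard_le (measurableSet_box d R) (volume_box_lt_top d _) hvolR
    _ ≤ ENNReal.ofReal (exp (-1 * L ^ d)) := by
        rw [add_zero, ← ENNReal.ofReal_add (by positivity) (by positivity), neg_one_mul]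
        refine ENNReal.ofReal_le_ofReal (le_trans ?_
          (exp_neg_two_mul_add_two_mul_exp_neg_three_mul_le (one_le_pow₀ hL)))
        gcongr
        rw [mul_pow]
        gcongr
        exact le_self_pow₀ one_le_two (by omega)
end

section
/- Suppose x, y, z ∈ ℝ^d with y, z in the Voronoi cell C(x) of a point configuration η̄ ∋ x, and set k = ‖y - z‖. Then at least one of the balls B_{k/3}(y) or B_{k/3}(z) contains no point of η̄. -/
/-- If `y, z` lie in the Voronoi cell of `x ∈ ξ` and `k = ‖y - z‖ > 0`, then one of the
closed balls `B_{k/3}(y)`, `B_{k/3}(z)` contains no point of `ξ`. -/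
theorem empty_ball_from_cell_diameter {d : ℕ} (ξ : Set (EuclideanSpace ℝ (Fin d)))
    (x y z : EuclideanSpace ℝ (Fin d)) (hx : x ∈ ξ)
    (hy : y ∈ VCell x ξ) (hz : z ∈ VCell x ξ) (hk : 0 < dist y z) :
    ξ ∩ Metric.closedBall y (dist y z / 3) = ∅ ∨
      ξ ∩ Metric.closedBall z (dist y z / 3) = ∅ := by
  by_contra h
  push_neg at h
  obtain ⟨h1, h2⟩ := h
  obtain ⟨p, hpξ, hp⟩ := h1
  obtain ⟨q, hqξ, hq⟩ := h2
  rw [Metric.mem_closedBall] at hp hq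
  have h3 := hy p hpξ
  have h4 := hz q hqξ
  have h5 := dist_triangle y x z
  have h6 : dist x z = dist z x := dist_comm x z
  have h7 : dist y p = dist p y := dist_comm y p
  have h8 : dist z q = dist q z := dist_comm z q
  linarith
end

section
/- Let d ≥ 1 and suppose each vertex x ∈ ℤ^d is declared 'bad' independently-enough in the following sense: for any set Γ' of pairwise ℓ^∞-12-separated vertices, P[all x ∈ Γ' are bad] ≤ q^{|Γ'|} for some q ∈ (0,1). Then for any finite *-connected set Γ ⊂ ℤ^d, P[ at least half the vertices of Γ are bad ] ≤ 2^{|Γ|} q^{c(d)|Γ|}, where c(d) > 0 is a dimensional constant. -/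
open MeasureTheory

/-- `*`-adjacency in `ℤ^d`: distinct points at `ℓ^∞` distance at most 1. -/
def starAdj {d : ℕ} (x y : Fin d → ℤ) : Prop := x ≠ y ∧ ∀ i, |x i - y i| ≤ 1

/-- A set `S ⊂ ℤ^d` is `*`-connected if any two of its points are joined by a path
inside `S` with `*`-adjacent consecutive points. -/
def StarConnectedSet {d : ℕ} (S : Set (Fin d → ℤ)) : Prop :=
  ∀ x ∈ S, ∀ y ∈ S,
    Relation.ReflTransGen (fun a b => starAdj a b ∧ a ∈ S ∧ b ∈ S) x y

/-- Any finite subset of `ℤ^d` contains a `12`-separated subset of proportion `12^{-d}`. -/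
lemma extract_sep (d : ℕ) (S : Finset (Fin d → ℤ)) :
    ∃ T : Finset (Fin d → ℤ), T ⊆ S ∧
      (∀ x ∈ T, ∀ y ∈ T, x ≠ y → ∃ i, (12 : ℤ) ≤ |x i - y i|) ∧
      S.card ≤ 12 ^ d * T.card := by
  classical
  set f : (Fin d → ℤ) → (Fin d → ZMod 12) := fun x i => (x i : ZMod 12) with hf
  obtain ⟨y, -, hy⟩ := Finset.exists_max_image (Finset.univ : Finset (Fin d → ZMod 12))
    (fun y => (S.filter (fun x => f x = y)).card) Finset.univ_nonempty
  refine ⟨S.filter (fun x => f x = y), Finset.filter_subset _ _, ?_, ?_⟩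
  · intro a ha b hb hab
    obtain ⟨i, hi⟩ := Function.ne_iff.mp hab
    refine ⟨i, ?_⟩
    have hfa := (Finset.mem_filter.mp ha).2
    have hfb := (Finset.mem_filter.mp hb).2
    have hcast : ((a i - b i : ℤ) : ZMod 12) = 0 := by
      push_cast
      have : (a i : ZMod 12) = (b i : ZMod 12) := by
        have := hfa.trans hfb.symm
        exact congrFun this i
      rw [this]; ring
    have hdvd : (12 : ℤ) ∣ a i - b i := (ZMod.intCast_zmod_eq_zero_iff_dvd _ 12).mp hcast
    have hpos : 0 < |a i - b i| := abs_pos.mpr (sub_ne_zero.mpr hi)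
    exact Int.le_of_dvd hpos ((dvd_abs _ _).mpr hdvd)
  · have hsum : S.card = ∑ z ∈ (Finset.univ : Finset (Fin d → ZMod 12)),
        (S.filter (fun x => f x = z)).card :=
      Finset.card_eq_sum_card_fiberwise (fun x _ => Finset.mem_univ (f x))
    have hle : S.card ≤ (Finset.univ : Finset (Fin d → ZMod 12)).card *
        (S.filter (fun x => f x = y)).card := by
      rw [hsum]
      calc ∑ z ∈ (Finset.univ : Finset (Fin d → ZMod 12)), (S.filter (fun x => f x = z)).card
          ≤ ∑ _z ∈ (Finset.univ : Finset (Fin d → ZMod 12)),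
            (S.filter (fun x => f x = y)).card := Finset.sum_le_sum fun z hz => hy z hz
        _ = _ := by rw [Finset.sum_const, smul_eq_mul]
    have hcard : (Finset.univ : Finset (Fin d → ZMod 12)).card = 12 ^ d := by
      simp [Finset.card_univ]
    rwa [hcard] at hle

/-- If bad events on `12`-separated families satisfy `P[all bad] ≤ q^{|Γ'|}`, then for
any finite `*`-connected `Γ`, the probability that at least half of `Γ` is bad is at
most `2^{|Γ|} q^{c(d)|Γ|}`, with `c(d) > 0` dimensional. -/
theorem half_bad_bound (d : ℕ) (hd : 1 ≤ d) :
    ∃ c : ℝ, 0 < c ∧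
      ∀ (Ω : Type) (_ : MeasurableSpace Ω) (P : Measure Ω), IsProbabilityMeasure P →
      ∀ q : ℝ, q ∈ Set.Ioo (0 : ℝ) 1 →
      ∀ bad : (Fin d → ℤ) → Set Ω,
        (∀ Γ' : Finset (Fin d → ℤ),
          (∀ x ∈ Γ', ∀ y ∈ Γ', x ≠ y → ∃ i, (12 : ℤ) ≤ |x i - y i|) →
          P (⋂ x ∈ Γ', bad x) ≤ ENNReal.ofReal (q ^ Γ'.card)) →
      ∀ Γ : Finset (Fin d → ℤ), StarConnectedSet (Γ : Set (Fin d → ℤ)) →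
        P {ω | (Γ.card : ℝ) ≤ 2 * ({x | x ∈ Γ ∧ ω ∈ bad x}.ncard : ℝ)} ≤
          ENNReal.ofReal ((2 : ℝ) ^ Γ.card * q ^ (c * (Γ.card : ℝ))) := by
  classical
  refine ⟨1 / (2 * 12 ^ d), by positivity, ?_⟩
  intro Ω m P hP q hq bad hsep Γ _hΓ
  set c : ℝ := 1 / (2 * 12 ^ d) with hc
  set N := Γ.card with hN
  set Ps : Finset (Finset (Fin d → ℤ)) :=
    (Γ.powerset.filter (fun B => N ≤ 2 * B.card)) with hPs
  have key : ∀ B ∈ Ps, P (⋂ x ∈ B, bad x) ≤ ENNReal.ofReal (q ^ (c * (N : ℝ))) := by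
    intro B hB
    rw [hPs, Finset.mem_filter, Finset.mem_powerset] at hB
    obtain ⟨hBΓ, hcard⟩ := hB
    obtain ⟨T, hTB, hsepT, hTcard⟩ := extract_sep d B
    have h1 : P (⋂ x ∈ B, bad x) ≤ P (⋂ x ∈ T, bad x) := by
      apply measure_mono
      intro ω hω
      simp only [Set.mem_iInter] at hω ⊢
      exact fun x hx => hω x (hTB hx)
    have h2 : P (⋂ x ∈ T, bad x) ≤ ENNReal.ofReal (q ^ T.card) := hsep T hsepT
    have h3 : q ^ T.card ≤ q ^ (c * (N : ℝ)) := by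
      rw [← Real.rpow_natCast q T.card]
      apply Real.rpow_le_rpow_of_exponent_ge hq.1 hq.2.le
      have hNle : (N : ℝ) ≤ 2 * 12 ^ d * (T.card : ℝ) := by
        have : N ≤ 2 * (12 ^ d * T.card) := hcard.trans (by omega)
        calc (N : ℝ) ≤ ((2 * (12 ^ d * T.card) : ℕ) : ℝ) := by exact_mod_cast this
          _ = 2 * 12 ^ d * (T.card : ℝ) := by push_cast; ring
      rw [hc]
      rw [div_mul_eq_mul_div, one_mul, div_le_iff₀ (by positivity)]
      linarith
    exact h1.trans (h2.trans (ENNReal.ofReal_le_ofReal h3))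
  have hsub : {ω | (N : ℝ) ≤ 2 * (({x | x ∈ Γ ∧ ω ∈ bad x}).ncard : ℝ)} ⊆
      ⋃ B ∈ Ps, ⋂ x ∈ B, bad x := by
    intro ω hω
    set B := Γ.filter (fun x => ω ∈ bad x) with hBdef
    have hBset : {x | x ∈ Γ ∧ ω ∈ bad x} = (B : Set (Fin d → ℤ)) := by
      ext x; simp [hBdef]
    have hωcard : (N : ℝ) ≤ 2 * (B.card : ℝ) := by
      have := hω
      rw [Set.mem_setOf_eq, hBset, Set.ncard_coe_finset] at this
      exact this
    have hBmem : B ∈ Ps := by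
      rw [hPs, Finset.mem_filter, Finset.mem_powerset]
      refine ⟨Finset.filter_subset _ _, ?_⟩
      exact_mod_cast hωcard
    refine Set.mem_biUnion hBmem ?_
    simp only [Set.mem_iInter]
    intro x hx
    exact (Finset.mem_filter.mp hx).2
  calc P {ω | (N : ℝ) ≤ 2 * (({x | x ∈ Γ ∧ ω ∈ bad x}).ncard : ℝ)}
      ≤ P (⋃ B ∈ Ps, ⋂ x ∈ B, bad x) := measure_mono hsub
    _ ≤ ∑ B ∈ Ps, P (⋂ x ∈ B, bad x) := measure_biUnion_finset_le _ _
    _ ≤ ∑ _B ∈ Ps, ENNReal.ofReal (q ^ (c * (N : ℝ))) := Finset.sum_le_sum key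
    _ = (Ps.card : ENNReal) * ENNReal.ofReal (q ^ (c * (N : ℝ))) := by
        rw [Finset.sum_const, nsmul_eq_mul]
    _ ≤ ((2 ^ N : ℕ) : ENNReal) * ENNReal.ofReal (q ^ (c * (N : ℝ))) := by
        apply mul_le_mul_left
        have : Ps.card ≤ 2 ^ N := by
          calc Ps.card ≤ Γ.powerset.card := Finset.card_filter_le _ _
            _ = 2 ^ N := by rw [Finset.card_powerset]
        exact_mod_cast this
    _ = ENNReal.ofReal ((2 : ℝ) ^ N * q ^ (c * (N : ℝ))) := by
        rw [ENNReal.ofReal_mul (by positivity)]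
        congr 1
        rw [show ((2 : ℝ) ^ N) = (((2 ^ N : ℕ) : ℝ)) by push_cast; ring,
          ENNReal.ofReal_natCast]
end
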